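/- arXiv:2310.14252 — 2 statements merged into one kernel-verified Lean document; each statement's English description precedes it below -/
import Mathlib

section
/- Every positive integer n has exactly one representation n = ∑_{0 ≤ i ≤ t} a_i·𝒦_i with all a_i ∈ {0, 1, 2}, leading digit a_t ≠ 0, and no index i with a_{i+1} = a_i = 2. -/
open Finset

/-- The sequence 𝒦 with 𝒦₀ = 1, 𝒦₁ = 3, 𝒦ₙ = 2𝒦ₙ₋₁ + 2𝒦ₙ₋₂. -/
def Kcal : ℕ → ℕ
  | 0 => 1
  | 1 => 3
  | (n + 2) => 2 * Kcal (n + 1) + 2 * Kcal n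

/-- For a digit string `a_t ⋯ a_0` given as the list `l = [a_0, a_1, …, a_t]`
(least significant digit first), its value `∑ a_i 𝒦_i`. -/
def valK (l : List ℕ) : ℕ := ∑ i ∈ Finset.range l.length, l.getD i 0 * Kcal i

/-- `l = [a_0, a_1, …, a_t]` is a canonical digit string: all digits in {0,1,2},
leading digit `a_t` nonzero, and no index `i` with `a_{i+1} = a_i = 2`. -/
def GoodRep (l : List ℕ) : Prop :=
  (∀ d ∈ l, d ≤ 2) ∧ (l.getLast? ≠ some 0) ∧
    ∀ i : ℕ, ¬ (l.getD i 0 = 2 ∧ l.getD (i + 1) 0 = 2)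

/-! A digit string with digits in {0, 1, 2} and no two adjacent 2s is *admissible*. An admissible
string of length `t` has value `< 𝒦_t`, and even `< 2 𝒦_{t-1}` when its top digit is not 2
(induction, using `𝒦_{t+1} = 2 𝒦_t + 2 𝒦_{t-1}`). Hence the top digit and the rest of a string of
length `t + 1` are the quotient and remainder of its value by `𝒦_t`: this gives uniqueness for a
fixed length and, run backwards, the greedy construction. A nonzero leading digit fixes the length:
`𝒦_t ≤ n < 𝒦_{t+1}` forces length `t + 1`. -/

theorem Kcal_add_two (n : ℕ) : Kcal (n + 2) = 2 * Kcal (n + 1) + 2 * Kcal n := rfl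

theorem Kcal_pos : ∀ n, 0 < Kcal n
  | 0 => Nat.one_pos
  | 1 => by decide
  | n + 2 => by have := Kcal_pos n; rw [Kcal_add_two]; omega

theorem two_mul_Kcal_le_Kcal_succ : ∀ n, 2 * Kcal n ≤ Kcal (n + 1)
  | 0 => by decide
  | n + 1 => by have := Kcal_pos n; rw [Kcal_add_two]; omega

theorem Kcal_succ_le_three_mul : ∀ n, Kcal (n + 1) ≤ 3 * Kcal n
  | 0 => le_rfl
  | n + 1 => by have := two_mul_Kcal_le_Kcal_succ n; rw [Kcal_add_two]; omega

theorem Kcal_strictMono : StrictMono Kcal :=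
  strictMono_nat_of_lt_succ fun n => by
    have := Kcal_pos n; have := two_mul_Kcal_le_Kcal_succ n; omega

theorem StrictMono.exists_le_lt_succ {f : ℕ → ℕ} (hf : StrictMono f) {n : ℕ} (hn : f 0 ≤ n) :
    ∃ t, f t ≤ n ∧ n < f (t + 1) := by
  induction n, hn using Nat.le_induction with
  | base => exact ⟨0, le_rfl, hf Nat.zero_lt_one⟩
  | succ n _ ih =>
    obtain ⟨t, hlo, hhi⟩ := ih
    rcases (show n + 1 ≤ f (t + 1) from hhi).lt_or_eq with hlt | heq
    · exact ⟨t, by omega, hlt⟩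
    · exact ⟨t + 1, heq.ge, by rw [heq]; exact hf (Nat.lt_succ_self _)⟩

theorem Monotone.eq_of_le_of_lt_succ {α : Type*} [Preorder α] {f : ℕ → α} (hf : Monotone f)
    {x : α} {s t : ℕ} (hs : f s ≤ x) (hs' : x < f (s + 1)) (ht : f t ≤ x) (ht' : x < f (t + 1)) :
    s = t := by
  by_contra hne
  rcases Nat.lt_or_gt_of_ne hne with h | h
  · exact (hf h).not_gt (ht.trans_lt hs')
  · exact (hf h).not_gt (hs.trans_lt ht')

def Admissible (l : List ℕ) : Prop :=
  (∀ d ∈ l, d ≤ 2) ∧ l.IsChain fun a b => ¬(a = 2 ∧ b = 2)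

theorem admissible_nil : Admissible [] := ⟨by simp, .nil⟩

theorem forall_getD_iff_isChain {l : List ℕ} :
    (∀ i, ¬(l.getD i 0 = 2 ∧ l.getD (i + 1) 0 = 2)) ↔ l.IsChain fun a b => ¬(a = 2 ∧ b = 2) := by
  rw [List.isChain_iff_getElem]
  refine ⟨fun h i hi => ?_, fun h i => ?_⟩
  · simpa only [List.getD_eq_getElem _ _ hi, List.getD_eq_getElem _ _ (Nat.lt_of_succ_lt hi)]
      using h i
  · by_cases hi : i + 1 < l.length
    · rw [List.getD_eq_getElem _ _ hi, List.getD_eq_getElem _ _ (Nat.lt_of_succ_lt hi)]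
      exact h i hi
    · rw [List.getD_eq_default _ _ (Nat.le_of_not_lt hi)]
      omega

theorem goodRep_iff {l : List ℕ} : GoodRep l ↔ Admissible l ∧ l.getLast? ≠ some 0 := by
  rw [GoodRep, Admissible, forall_getD_iff_isChain]
  tauto

theorem admissible_append_singleton_iff {l : List ℕ} {a : ℕ} :
    Admissible (l ++ [a]) ↔ Admissible l ∧ a ≤ 2 ∧ (a = 2 → l.getLast? ≠ some 2) := by
  simp only [Admissible, List.isChain_append, List.mem_append, List.mem_singleton, or_imp,
    forall_and, forall_eq, List.isChain_singleton, List.head?_cons, Option.mem_def,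
    Option.some.injEq, forall_eq', true_and]
  constructor
  · rintro ⟨⟨hl, ha⟩, hc, hlast⟩
    exact ⟨⟨hl, hc⟩, ha, fun h2 h => hlast 2 h ⟨rfl, h2⟩⟩
  · rintro ⟨⟨hl, hc⟩, ha, hlast⟩
    exact ⟨⟨hl, ha⟩, hc, fun x hx ⟨hx2, ha2⟩ => hlast ha2 (hx2 ▸ hx)⟩

theorem valK_nil : valK [] = 0 := rfl

theorem valK_append_singleton (l : List ℕ) (a : ℕ) :
    valK (l ++ [a]) = valK l + a * Kcal l.length := by
  rw [valK, List.length_append, List.length_singleton, Finset.sum_range_succ,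
    List.getD_append_right _ _ _ _ le_rfl, Nat.sub_self]
  congr 1
  exact Finset.sum_congr rfl fun i hi => by
    rw [List.getD_append _ _ _ _ (Finset.mem_range.mp hi)]

/-- With `t = l.length`, the second bound is `valK l < 2 𝒦_{t-1}` written without subtraction. -/
theorem Admissible.valK_bounds {l : List ℕ} (h : Admissible l) :
    valK l < Kcal l.length ∧
      (l.getLast? ≠ some 2 → 2 * Kcal l.length + valK l < Kcal (l.length + 1)) := by
  induction l using List.reverseRecOn with
  | nil => exact ⟨by decide, fun _ => by decide⟩
  | append_singleton m a ih =>
    obtain ⟨hm, ha, ha2⟩ := admissible_append_singleton_iff.1 h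
    obtain ⟨hlt, hlt2⟩ := ih hm
    have := two_mul_Kcal_le_Kcal_succ m.length
    rw [valK_append_singleton, List.length_append, List.length_singleton, List.getLast?_concat,
      Kcal_add_two]
    interval_cases a
    · omega
    · omega
    · exact ⟨by have := hlt2 (ha2 rfl); omega, fun h2 => (h2 rfl).elim⟩

theorem Admissible.valK_lt {l : List ℕ} (h : Admissible l) : valK l < Kcal l.length :=
  h.valK_bounds.1

theorem le_valK_of_getLast?_eq_two {l : List ℕ} (h : l.getLast? = some 2) :
    Kcal (l.length + 1) ≤ 2 * Kcal l.length + valK l := by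
  obtain ⟨m, rfl⟩ := List.getLast?_eq_some_iff.1 h
  rw [valK_append_singleton, List.length_append, List.length_singleton, Kcal_add_two]
  omega

theorem Admissible.eq_of_valK_eq {l l' : List ℕ} (h : Admissible l) (h' : Admissible l')
    (hlen : l.length = l'.length) (hval : valK l = valK l') : l = l' := by
  induction l using List.reverseRecOn generalizing l' with
  | nil => exact (List.length_eq_zero_iff.1 hlen.symm).symm
  | append_singleton m a ih =>
    obtain ⟨m', a', rfl⟩ : ∃ m' a', l' = m' ++ [a'] :=
      (List.eq_nil_or_concat' l').resolve_left (by rintro rfl; simp at hlen)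
    have hm := (admissible_append_singleton_iff.1 h).1
    have hm' := (admissible_append_singleton_iff.1 h').1
    have hlen' : m.length = m'.length := by simpa using hlen
    have hK := Kcal_pos m.length
    have hlt := hm.valK_lt
    have hlt' := hm'.valK_lt
    rw [valK_append_singleton, valK_append_singleton, ← hlen'] at hval
    rw [← hlen'] at hlt'
    have hdigit : a = a' := by
      simpa [Nat.add_mul_div_right _ _ hK, Nat.div_eq_of_lt hlt, Nat.div_eq_of_lt hlt'] using
        congrArg (· / Kcal m.length) hval
    subst hdigit
    rw [ih hm hm' hlen' (by omega)]

theorem exists_admissible_valK_eq {t r : ℕ} (hr : r < Kcal t) :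
    ∃ l, Admissible l ∧ l.length = t ∧ valK l = r := by
  induction t generalizing r with
  | zero => exact ⟨[], admissible_nil, rfl, by rw [valK_nil, Nat.lt_one_iff.1 hr]⟩
  | succ t ih =>
    have hK := Kcal_pos t
    have hdiv := Nat.mod_add_div' r (Kcal t)
    obtain ⟨l, hl, hlen, hval⟩ := ih (Nat.mod_lt r hK)
    refine ⟨l ++ [r / Kcal t], admissible_append_singleton_iff.2 ⟨hl, ?_, fun h2 hlast => ?_⟩,
      by simp [hlen], by rw [valK_append_singleton, hval, hlen, hdiv]⟩
    · have := Kcal_succ_le_three_mul t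
      exact Nat.lt_succ_iff.1 ((Nat.div_lt_iff_lt_mul hK).2 (by omega))
    · have := le_valK_of_getLast?_eq_two hlast
      rw [hlen, hval] at this
      rw [h2] at hdiv
      omega

theorem Admissible.Kcal_le_valK_iff {m : List ℕ} {a : ℕ} (h : Admissible (m ++ [a])) :
    Kcal m.length ≤ valK (m ++ [a]) ↔ a ≠ 0 := by
  have := (admissible_append_singleton_iff.1 h).1.valK_lt
  rw [valK_append_singleton]
  constructor
  · rintro hle rfl
    omega
  · intro ha
    have := Nat.le_mul_of_pos_left (Kcal m.length) (Nat.pos_of_ne_zero ha)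
    omega

theorem Admissible.goodRep_of_Kcal_le {l : List ℕ} {t : ℕ} (h : Admissible l)
    (hlen : l.length = t + 1) (hle : Kcal t ≤ valK l) : GoodRep l := by
  obtain ⟨m, a, rfl⟩ := (List.eq_nil_or_concat' l).resolve_left (by rintro rfl; simp at hlen)
  have hm : m.length = t := by simpa using hlen
  refine goodRep_iff.2 ⟨h, ?_⟩
  rw [List.getLast?_concat, Ne, Option.some_inj, ← Ne, ← h.Kcal_le_valK_iff, hm]
  exact hle

theorem GoodRep.length_eq_succ {l : List ℕ} {t : ℕ} (h : GoodRep l) (hlo : Kcal t ≤ valK l)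
    (hhi : valK l < Kcal (t + 1)) : l.length = t + 1 := by
  obtain ⟨hl, hlast⟩ := goodRep_iff.1 h
  obtain ⟨m, a, rfl⟩ := (List.eq_nil_or_concat' l).resolve_left fun hnil => by
    subst hnil; have := Kcal_pos t; rw [valK_nil] at hlo; omega
  have hm : Kcal m.length ≤ valK (m ++ [a]) :=
    hl.Kcal_le_valK_iff.2 fun ha => hlast (by rw [List.getLast?_concat, ha])
  have hlt := hl.valK_lt
  rw [List.length_append, List.length_singleton] at hlt ⊢
  rw [Kcal_strictMono.monotone.eq_of_le_of_lt_succ hm hlt hlo hhi]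

theorem canonical_representation_exists_unique :
    ∀ n : ℕ, 1 ≤ n → ∃! l : List ℕ, GoodRep l ∧ valK l = n := by
  intro n hn
  obtain ⟨t, hlo, hhi⟩ := Kcal_strictMono.exists_le_lt_succ hn
  obtain ⟨l, hl, hlen, rfl⟩ := exists_admissible_valK_eq hhi
  refine ⟨l, ⟨hl.goodRep_of_Kcal_le hlen hlo, rfl⟩, fun l' ⟨hl', hval⟩ => ?_⟩
  rw [← hval] at hlo hhi
  exact (goodRep_iff.1 hl').1.eq_of_valK_eq hl (by rw [hl'.length_eq_succ hlo hhi, hlen]) hval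
end

section
/- For all n ≥ 1, B_n = 2·A_n + n, where A_n is the position of the n-th occurrence of the letter 1 in k and B_n is the position of the n-th occurrence of the letter 0 in k (positions indexed from 1). -/
/-- The substitution `h` with `h(1) = 110` and `h(0) = 11`. -/
def hsub : ℕ → List ℕ
  | 0 => [1, 1]
  | 1 => [1, 1, 0]
  | _ => []

/-- `h` extended to words by concatenation. -/
def happ (w : List ℕ) : List ℕ := w.flatMap hsub

/-- `K n = h^n(1)`. -/
def Kword (n : ℕ) : List ℕ := happ^[n] [1]

/-! Since `k = h(k)`, if the `n`-th `1` of `k` sits at position `a`, then the prefix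
`u = k₁ ⋯ k_{a-1}` contains `n - 1` ones and `h(u) 110` is a prefix of `k`. The word `h(u)` has
length `2(a - 1) + (n - 1)` and contains exactly `n - 1` zeros, one for each `1` of `u`, so the `0`
of that `110` is the `n`-th `0` of `k`, at position `2(a - 1) + (n - 1) + 3 = 2a + n`. -/

theorem List.exists_prefix_append_of_lt_count {α : Type*} [BEq α] [LawfulBEq α] {v : α}
    {w : List α} {n : ℕ} (h : n < w.count v) : ∃ u, u ++ [v] <+: w ∧ u.count v = n := by
  induction w generalizing n with
  | nil => simp at h
  | cons a w ih =>
    by_cases hav : a = v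
    · subst hav
      rcases n with _ | n
      · exact ⟨[], by simp, rfl⟩
      · obtain ⟨u, hu, rfl⟩ := ih (n := n) (by simpa using h)
        exact ⟨a :: u, by simpa using hu, by simp⟩
    · obtain ⟨u, hu, rfl⟩ := ih (n := n) (by simpa [hav] using h)
      exact ⟨a :: u, by simpa using hu, by simp [hav]⟩

section Reading

variable {k : ℕ → ℕ} {w u : List ℕ}

theorem apply_length_add_one_of_prefix (hw : ∀ i < w.length, k (i + 1) = w.getD i 0)
    {x : ℕ} (hu : u ++ [x] <+: w) : k (u.length + 1) = x := by
  have hlt : u.length < w.length := by simpa using hu.length_le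
  rw [hw _ hlt, List.getD_eq_getElem _ _ hlt, ← hu.getElem (by simp)]
  simp

theorem count_length_add_one_of_prefix (hw : ∀ i < w.length, k (i + 1) = w.getD i 0)
    (hu : u <+: w) (v : ℕ) :
    Nat.count (fun i => 1 ≤ i ∧ k i = v) (u.length + 1) = u.count v := by
  induction u using List.reverseRecOn with
  | nil => simp [Nat.count_succ]
  | append_singleton u x ih =>
    rw [List.length_append, List.length_singleton, Nat.count_succ,
      ih ((List.prefix_append u [x]).trans hu), apply_length_add_one_of_prefix hw hu,
      List.count_append, List.count_singleton]
    simp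

theorem nth_count_of_prefix (hw : ∀ i < w.length, k (i + 1) = w.getD i 0) {v : ℕ}
    (hu : u ++ [v] <+: w) :
    Nat.nth (fun i => 1 ≤ i ∧ k i = v) (u.count v) = u.length + 1 := by
  rw [← count_length_add_one_of_prefix hw ((List.prefix_append u [v]).trans hu)]
  exact Nat.nth_count ⟨by omega, apply_length_add_one_of_prefix hw hu⟩

end Reading

theorem happ_append (u v : List ℕ) : happ (u ++ v) = happ u ++ happ v :=
  List.flatMap_append

theorem happ_cons (a : ℕ) (u : List ℕ) : happ (a :: u) = hsub a ++ happ u := rfl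

theorem List.IsPrefix.happ {u w : List ℕ} (h : u <+: w) : happ u <+: happ w := by
  obtain ⟨t, rfl⟩ := h
  exact ⟨_root_.happ t, (happ_append u t).symm⟩

theorem le_one_of_mem_happ {u : List ℕ} {x : ℕ} (hx : x ∈ happ u) : x ≤ 1 := by
  obtain ⟨a, -, hx⟩ := List.mem_flatMap.mp hx
  rcases a with _ | _ | a <;> simp [hsub] at hx <;> omega

theorem count_zero_happ (u : List ℕ) : (happ u).count 0 = u.count 1 := by
  induction u with
  | nil => rfl
  | cons a u ih => rcases a with _ | _ | a <;> simp [happ_cons, hsub, ih]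

theorem count_one_happ (u : List ℕ) : (happ u).count 1 = 2 * (u.count 0 + u.count 1) := by
  induction u with
  | nil => rfl
  | cons a u ih =>
    rcases a with _ | _ | a <;> simp [happ_cons, hsub, ih] <;> omega

theorem length_happ {u : List ℕ} (hu : ∀ x ∈ u, x ≤ 1) :
    (happ u).length = 2 * u.length + u.count 1 := by
  induction u with
  | nil => rfl
  | cons a u ih =>
    have ha : a ≤ 1 := hu a List.mem_cons_self
    rw [List.forall_mem_cons] at hu
    interval_cases a <;> simp [happ_cons, hsub, ih hu.2] <;> omega

theorem Kword_succ (m : ℕ) : Kword (m + 1) = happ (Kword m) :=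
  Function.iterate_succ_apply' happ m [1]

theorem le_one_of_mem_Kword {m x : ℕ} (hx : x ∈ Kword m) : x ≤ 1 := by
  cases m with
  | zero => simp_all [Kword]
  | succ m => exact le_one_of_mem_happ (Kword_succ m ▸ hx)

theorem lt_count_one_Kword (m : ℕ) : m < (Kword m).count 1 := by
  induction m with
  | zero => simp [Kword]
  | succ m ih => rw [Kword_succ, count_one_happ]; omega

theorem B_eq_two_A_add_n_general
    (k : ℕ → ℕ)
    (hk : ∀ (m i : ℕ), i < (Kword m).length → k (i + 1) = (Kword m).getD i 0)
    (A B : ℕ → ℕ)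
    (hA : ∀ n : ℕ, 1 ≤ n → A n = Nat.nth (fun i => 1 ≤ i ∧ k i = 1) (n - 1))
    (hB : ∀ n : ℕ, 1 ≤ n → B n = Nat.nth (fun i => 1 ≤ i ∧ k i = 0) (n - 1)) :
    ∀ n : ℕ, 1 ≤ n → B n = 2 * A n + n := by
  intro n hn
  obtain ⟨u, hu, hcount⟩ :=
    List.exists_prefix_append_of_lt_count (v := 1) (n := n - 1) (w := Kword n)
      (by have := lt_count_one_Kword n; omega)
  have hAn : A n = u.length + 1 := by rw [hA n hn, ← hcount, nth_count_of_prefix (hk n) hu]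
  have himage : happ u ++ [1, 1] ++ [0] <+: Kword (n + 1) := by
    simpa [Kword_succ, happ_append, happ, hsub] using hu.happ
  have hBn : B n = (happ u ++ [1, 1]).length + 1 := by
    rw [hB n hn, ← nth_count_of_prefix (hk (n + 1)) himage, List.count_append,
      count_zero_happ, hcount]
    simp
  have hbin : ∀ x ∈ u, x ≤ 1 := fun x hx =>
    le_one_of_mem_Kword (hu.subset (List.mem_append_left _ hx))
  rw [hAn, hBn, List.length_append, length_happ hbin, hcount, List.length_cons, List.length_cons,
    List.length_nil]
  omega

/-- `B_n = 2A_n + n` where, for `n ≥ 1`, `A_n` (resp. `B_n`) is the position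
(indexed from 1) of the `n`-th `1` (resp. `0`) in the fixed point `k` of `h`. -/
theorem B_eq_two_A_add_n
    (k : ℕ → ℕ)
    (hk : ∀ (m i : ℕ), i < (Kword m).length → k (i + 1) = (Kword m).getD i 0)
    (A B : ℕ → ℕ)
    (hA0 : A 0 = 0) (hB0 : B 0 = 0)
    (hA : ∀ n : ℕ, 1 ≤ n → A n = Nat.nth (fun i => 1 ≤ i ∧ k i = 1) (n - 1))
    (hB : ∀ n : ℕ, 1 ≤ n → B n = Nat.nth (fun i => 1 ≤ i ∧ k i = 0) (n - 1)) :
    ∀ n : ℕ, 1 ≤ n → B n = 2 * A n + n :=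
  B_eq_two_A_add_n_general k hk A B hA hB
end
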